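/- arXiv:2601.12144 — 2 statements merged into one kernel-verified Lean document; each statement's English description precedes it below -/
import Mathlib

section
/- For every integer n ≥ 1 and every integer j ≥ 1, a_j = (1/(2n)) · Σ_{k=0}^{n−1} (2·cos(2πk/n))^j (an equality of real numbers, the left-hand side being the natural number a_j regarded as a real number). -/
open scoped Real

noncomputable section

/-- Words in two letters. -/
abbrev FW := FreeMonoid (Fin 2)

/-- The free associative unital ℂ-algebra on two generators. -/
abbrev FA := MonoidAlgebra ℂ FW

/-- The generator `u`. -/
def gu : FA := MonoidAlgebra.of ℂ FW (FreeMonoid.of 0)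

/-- The generator `v`. -/
def gv : FA := MonoidAlgebra.of ℂ FW (FreeMonoid.of 1)

/-- The algebra endomorphism `ρ` with `ρ(u) = ξ u`, `ρ(v) = ξ⁻¹ v`, `ξ = exp(2πi/n)`. -/
def dRho (n : ℕ) : FA →ₐ[ℂ] FA :=
  MonoidAlgebra.lift ℂ FA FW
    (FreeMonoid.lift fun i : Fin 2 =>
      if i = 0 then Complex.exp (2 * Real.pi * Complex.I / n) • gu
      else (Complex.exp (2 * Real.pi * Complex.I / n))⁻¹ • gv)

/-- The algebra endomorphism `τ` exchanging `u` and `v`. -/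
def dTau : FA →ₐ[ℂ] FA :=
  MonoidAlgebra.lift ℂ FA FW
    (FreeMonoid.lift fun i : Fin 2 => if i = 0 then gv else gu)

/-- The invariant algebra `ℂ⟨u,v⟩^{D_{2n}}`. -/
def invAlg (n : ℕ) : Subalgebra ℂ FA :=
  AlgHom.equalizer (dRho n) (AlgHom.id ℂ FA) ⊓ AlgHom.equalizer dTau (AlgHom.id ℂ FA)

/-- The degree-`j` homogeneous component of `ℂ⟨u,v⟩`: the span of words of length `j`. -/
def degComp (j : ℕ) : Submodule ℂ FA :=
  MonoidAlgebra.supported ℂ ℂ {w : FW | FreeMonoid.length w = j}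

/-- `a_j`: the dimension of the degree-`j` homogeneous component of the invariant algebra. -/
def aDim (n j : ℕ) : ℕ :=
  Module.finrank ℂ ↥((invAlg n).toSubmodule ⊓ degComp j)

/-!
`ρ` acts diagonally on words: it multiplies a word `w` by `ξ ^ charge w`, where `charge w` is the
number of `u`s minus the number of `v`s, while `τ` permutes the words by exchanging the two letters.
So the degree-`j` invariants have the basis `w + τ w`, one vector for each `τ`-orbit of words of
length `j` and charge divisible by `n`; for `j ≥ 1` every such orbit has exactly two elements, one
of them starting with `u`. On the other side, expanding `(ξ^k + ξ^(-k))^j = ∑ ξ^(k · charge w)`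
over the words of length `j` and averaging over `k` counts exactly the words of charge divisible
by `n`, and `ξ^k + ξ^(-k) = 2 cos (2πk/n)`.
-/

open Finset

lemma zpow_sum₀ {M ι : Type*} [CommGroupWithZero M] {x : M} (hx : x ≠ 0) (s : Finset ι)
    (f : ι → ℤ) : x ^ (∑ i ∈ s, f i) = ∏ i ∈ s, x ^ f i := by
  classical
  induction s using Finset.induction_on with
  | empty => simp
  | insert a s ha ih => rw [sum_insert ha, prod_insert ha, zpow_add₀ hx, ih]

namespace IsPrimitiveRoot

variable {K : Type*} [Field K] {ζ : K} {n : ℕ}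

lemma sum_range_zpow_pow (hζ : IsPrimitiveRoot ζ n) (d : ℤ) :
    ∑ k ∈ range n, (ζ ^ d) ^ k = if (n : ℤ) ∣ d then (n : K) else 0 := by
  split_ifs with hd
  · simp [(hζ.zpow_eq_one_iff_dvd d).mpr hd]
  · have hne : ζ ^ d ≠ 1 := fun h => hd ((hζ.zpow_eq_one_iff_dvd d).mp h)
    have hpow : (ζ ^ d) ^ n = 1 := by
      rw [← zpow_natCast, ← zpow_mul, mul_comm, zpow_mul, zpow_natCast, hζ.pow_eq_one, one_zpow]
    rw [geom_sum_eq hne, hpow, sub_self, zero_div]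

lemma sum_range_sum_pow_zpow {ι : Type*} (hζ : IsPrimitiveRoot ζ n) (s : Finset ι)
    (c : ι → ℤ) :
    ∑ k ∈ range n, ∑ i ∈ s, (ζ ^ k) ^ c i = n * #(s.filter fun i => (n : ℤ) ∣ c i) := by
  have hcomm (k : ℕ) (d : ℤ) : (ζ ^ k) ^ d = (ζ ^ d) ^ k := by
    rw [← zpow_natCast, ← zpow_natCast, ← zpow_mul, ← zpow_mul, mul_comm]
  simp_rw [hcomm, sum_comm (s := range n), hζ.sum_range_zpow_pow, sum_ite, sum_const_zero,
    add_zero, sum_const, nsmul_eq_mul, mul_comm]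

end IsPrimitiveRoot

namespace DihedralInvariants

def letterCharge : Fin 2 → ℤ := ![1, -1]

def charge (w : FW) : ℤ := (w.toList.map letterCharge).sum

lemma charge_of_mul (a : Fin 2) (w : FW) :
    charge (FreeMonoid.of a * w) = letterCharge a + charge w := by
  simp [charge]

def swapLetters : FW →* FW := FreeMonoid.map Fin.rev

lemma toList_swapLetters (w : FW) : (swapLetters w).toList = w.toList.map Fin.rev := rfl

lemma swapLetters_involutive : Function.Involutive swapLetters := fun w => by
  apply FreeMonoid.toList.injective
  simp [toList_swapLetters, Function.comp_def]

lemma length_swapLetters (w : FW) : (swapLetters w).length = w.length := by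
  simp [FreeMonoid.length, toList_swapLetters]

lemma charge_swapLetters (w : FW) : charge (swapLetters w) = -charge w := by
  have h : letterCharge ∘ Fin.rev = Neg.neg ∘ letterCharge := by
    funext a; fin_cases a <;> rfl
  rw [charge, charge, toList_swapLetters, List.map_map, h, ← List.map_map, List.sum_neg]

lemma head?_swapLetters (w : FW) :
    (swapLetters w).toList.head? = w.toList.head?.map Fin.rev := by
  rw [toList_swapLetters, List.head?_map]

def wordOfFn {j : ℕ} (g : Fin j → Fin 2) : FW := FreeMonoid.ofList (List.ofFn g)

lemma wordOfFn_injective (j : ℕ) : Function.Injective (wordOfFn (j := j)) :=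
  fun _ _ h => List.ofFn_injective (FreeMonoid.ofList.injective h)

lemma charge_wordOfFn {j : ℕ} (g : Fin j → Fin 2) :
    charge (wordOfFn g) = ∑ i, letterCharge (g i) := by
  simp [charge, wordOfFn, List.sum_ofFn]

def words (j : ℕ) : Finset FW := univ.map ⟨wordOfFn, wordOfFn_injective j⟩

lemma mem_words {j : ℕ} {w : FW} : w ∈ words j ↔ w.length = j := by
  constructor
  · rintro hw
    obtain ⟨g, -, rfl⟩ := mem_map.mp hw
    simp [wordOfFn, FreeMonoid.length]
  · rintro rfl
    refine mem_map.mpr ⟨w.toList.get, mem_univ _, ?_⟩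
    apply FreeMonoid.toList.injective
    simp only [Function.Embedding.coeFn_mk, wordOfFn, FreeMonoid.toList_ofList]
    exact List.ofFn_get _

def rhoFixedWords (n j : ℕ) : Finset FW := (words j).filter fun w => (n : ℤ) ∣ charge w

def orbitReps (n j : ℕ) : Finset FW :=
  (rhoFixedWords n j).filter fun w => w.toList.head? = some 0

lemma swapLetters_mem_rhoFixedWords {n j : ℕ} {w : FW} (hw : w ∈ rhoFixedWords n j) :
    swapLetters w ∈ rhoFixedWords n j := by
  simpa only [rhoFixedWords, mem_filter, mem_words, length_swapLetters, charge_swapLetters,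
    dvd_neg] using hw

lemma head?_eq_some_one_of_ne {n j : ℕ} (hj : 1 ≤ j) {w : FW} (hw : w ∈ rhoFixedWords n j)
    (h0 : w.toList.head? ≠ some 0) : w.toList.head? = some 1 := by
  have hlen : w.toList ≠ [] := by
    simp only [rhoFixedWords, mem_filter, mem_words] at hw
    rw [← List.length_pos_iff, ← FreeMonoid.length, hw.1]
    omega
  obtain ⟨a, ha⟩ := Option.ne_none_iff_exists'.mp (List.head?_eq_none_iff.not.mpr hlen)
  rw [ha] at h0 ⊢
  fin_cases a <;> simp_all

lemma card_rhoFixedWords_eq_two_mul {n j : ℕ} (hj : 1 ≤ j) :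
    #(rhoFixedWords n j) = 2 * #(orbitReps n j) := by
  rw [← card_filter_add_card_filter_not (fun w : FW => w.toList.head? = some 0), two_mul]
  congr 1
  refine card_nbij' swapLetters swapLetters ?_ ?_ (fun w _ => swapLetters_involutive w)
    (fun w _ => swapLetters_involutive w)
  · intro w hw
    simp only [orbitReps, coe_filter, Set.mem_ofPred_eq] at hw ⊢
    refine ⟨swapLetters_mem_rhoFixedWords hw.1, ?_⟩
    rw [head?_swapLetters, head?_eq_some_one_of_ne hj hw.1 hw.2]
    rfl
  · intro w hw
    simp only [orbitReps, coe_filter, Set.mem_ofPred_eq] at hw ⊢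
    refine ⟨swapLetters_mem_rhoFixedWords hw.1, ?_⟩
    rw [head?_swapLetters, hw.2]
    decide

open MonoidAlgebra

lemma dTau_of (w : FW) : dTau (of ℂ FW w) = of ℂ FW (swapLetters w) := by
  have : (dTau : FA →* FA).comp (of ℂ FW) = (of ℂ FW).comp swapLetters := by
    refine FreeMonoid.hom_eq fun a => ?_
    fin_cases a <;> simp [dTau, swapLetters, gu, gv]
  exact DFunLike.congr_fun this w

lemma coeff_dTau (f : FA) (w : FW) : (dTau f).coeff w = f.coeff (swapLetters w) := by
  induction f using MonoidAlgebra.induction_linear with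
  | zero => simp
  | add f g hf hg => simp only [map_add, coeff_add, Finsupp.add_apply, hf, hg]
  | single a c =>
    have hsingle : single a c = c • of ℂ FW a := by simp [smul_single]
    rw [hsingle, map_smul, dTau_of, coeff_smul_apply, coeff_smul_apply, of_apply, of_apply,
      coeff_single, coeff_single, ← swapLetters_involutive w,
      Finsupp.single_apply_left swapLetters_involutive.injective, swapLetters_involutive]

def xi (n : ℕ) : ℂ := Complex.exp (2 * π * Complex.I / n)

lemma xi_ne_zero (n : ℕ) : xi n ≠ 0 := Complex.exp_ne_zero _

lemma dRho_of (n : ℕ) (w : FW) : dRho n (of ℂ FW w) = xi n ^ charge w • of ℂ FW w := by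
  induction w using FreeMonoid.inductionOn' with
  | one => rw [map_one, map_one]; simp [charge]
  | of_mul a w ih =>
    have hgen : dRho n (of ℂ FW (.of a)) = xi n ^ letterCharge a • of ℂ FW (.of a) := by
      fin_cases a <;> simp [dRho, gu, gv, letterCharge, xi]
    rw [map_mul, map_mul, ih, hgen, smul_mul_smul_comm, charge_of_mul,
      zpow_add₀ (xi_ne_zero n)]

lemma coeff_dRho (n : ℕ) (f : FA) (w : FW) :
    (dRho n f).coeff w = xi n ^ charge w * f.coeff w := by
  induction f using MonoidAlgebra.induction_linear with
  | zero => simp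
  | add f g hf hg => simp only [map_add, coeff_add, Finsupp.add_apply, hf, hg, mul_add]
  | single a c =>
    classical
    have hsingle : single a c = c • of ℂ FW a := by simp [smul_single]
    rw [hsingle, map_smul, dRho_of, smul_smul, coeff_smul_apply, coeff_smul_apply, of_apply,
      coeff_single, Finsupp.single_apply]
    split_ifs with h
    · subst h; simp [mul_comm]
    · simp

lemma dRho_eq_self_iff {n : ℕ} (hn : n ≠ 0) (f : FA) :
    dRho n f = f ↔ ∀ w, f.coeff w ≠ 0 → (n : ℤ) ∣ charge w := by
  have hxi : IsPrimitiveRoot (xi n) n := Complex.isPrimitiveRoot_exp n hn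
  simp only [← coeff_inj, Finsupp.ext_iff, coeff_dRho]
  refine forall_congr' fun w => ?_
  rw [mul_left_eq_self₀, hxi.zpow_eq_one_iff_dvd, or_iff_not_imp_right]

lemma dTau_eq_self_iff (f : FA) : dTau f = f ↔ ∀ w, f.coeff (swapLetters w) = f.coeff w := by
  simp only [← coeff_inj, Finsupp.ext_iff, coeff_dTau]

lemma mem_invAlg_inf_degComp_iff {n : ℕ} (hn : n ≠ 0) (j : ℕ) (f : FA) :
    f ∈ (invAlg n).toSubmodule ⊓ degComp j ↔
      (∀ w ∉ rhoFixedWords n j, f.coeff w = 0) ∧ ∀ w, f.coeff (swapLetters w) = f.coeff w := by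
  have hinv : f ∈ invAlg n ↔ dRho n f = f ∧ dTau f = f := Iff.rfl
  rw [Submodule.mem_inf, Subalgebra.mem_toSubmodule, hinv, dRho_eq_self_iff hn,
    dTau_eq_self_iff, degComp, mem_supported']
  simp only [rhoFixedWords, mem_filter, mem_words, Set.mem_ofPred_eq, not_and_or]
  grind

lemma swapLetters_notMem_orbitReps {n j : ℕ} {w : FW} (hw : w ∈ orbitReps n j) :
    swapLetters w ∉ orbitReps n j := by
  simp only [orbitReps, mem_filter] at hw ⊢
  rw [head?_swapLetters, hw.2]
  exact fun h => absurd h.2 (by decide)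

lemma eq_zero_of_coeff_orbitReps_eq_zero {n j : ℕ} (hn : n ≠ 0) (hj : 1 ≤ j) {f : FA}
    (hf : f ∈ (invAlg n).toSubmodule ⊓ degComp j) (h : ∀ r ∈ orbitReps n j, f.coeff r = 0) :
    f = 0 := by
  obtain ⟨hsupp, hswap⟩ := (mem_invAlg_inf_degComp_iff hn j f).mp hf
  ext w
  by_cases hw : w ∈ rhoFixedWords n j
  · by_cases h0 : w.toList.head? = some 0
    · exact h w (mem_filter.mpr ⟨hw, h0⟩)
    · rw [← hswap]
      refine h _ (mem_filter.mpr ⟨swapLetters_mem_rhoFixedWords hw, ?_⟩)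
      rw [head?_swapLetters, head?_eq_some_one_of_ne hj hw h0]
      rfl
  · exact hsupp w hw

def orbitSum (w : FW) : FA := single w 1 + single (swapLetters w) 1

lemma orbitSum_mem {n : ℕ} (hn : n ≠ 0) {j : ℕ} {w : FW} (hw : w ∈ rhoFixedWords n j) :
    orbitSum w ∈ (invAlg n).toSubmodule ⊓ degComp j := by
  classical
  rw [mem_invAlg_inf_degComp_iff hn]
  refine ⟨fun x hx => ?_, fun x => ?_⟩
  · have h1 : w ≠ x := by rintro rfl; exact hx hw
    have h2 : swapLetters w ≠ x := by rintro rfl; exact hx (swapLetters_mem_rhoFixedWords hw)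
    simp [orbitSum, h1, h2]
  · simp only [orbitSum, coeff_add, coeff_single, Finsupp.add_apply, Finsupp.single_apply,
      swapLetters_involutive.injective.eq_iff, swapLetters_involutive.eq_iff]
    exact add_comm _ _

lemma coeff_orbitSum_of_mem_orbitReps {n j : ℕ} {r s : FW} (hr : r ∈ orbitReps n j)
    (hs : s ∈ orbitReps n j) : (orbitSum r).coeff s = Finsupp.single r 1 s := by
  have hne : swapLetters r ≠ s := by rintro rfl; exact swapLetters_notMem_orbitReps hr hs
  simp [orbitSum, Finsupp.single_eq_of_ne' hne]

theorem aDim_eq_card_orbitReps {n j : ℕ} (hn : n ≠ 0) (hj : 1 ≤ j) :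
    aDim n j = #(orbitReps n j) := by
  set V := (invAlg n).toSubmodule ⊓ degComp j
  let e (r : orbitReps n j) : V :=
    ⟨orbitSum r, orbitSum_mem hn (mem_filter.mp r.2).1⟩
  let ε (r : orbitReps n j) : Module.Dual ℂ V :=
    Finsupp.lapply r.1 ∘ₗ (coeffLinearEquiv ℂ).toLinearMap ∘ₗ V.subtype
  have hε (r : orbitReps n j) (f : V) : ε r f = (f : FA).coeff r := rfl
  have hbasis : Module.DualBases e ε :=
    { eval_same := fun r => by
        rw [hε, coeff_orbitSum_of_mem_orbitReps r.2 r.2, Finsupp.single_eq_same]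
      eval_of_ne := fun r s hrs => by
        change ε r (e s) = 0
        rw [hε, coeff_orbitSum_of_mem_orbitReps s.2 r.2,
          Finsupp.single_eq_of_ne' (Subtype.coe_injective.ne hrs.symm)]
      total := fun {f g} hfg => by
        rw [← sub_eq_zero, ← Subtype.coe_inj, Submodule.coe_sub, Submodule.coe_zero]
        refine eq_zero_of_coeff_orbitReps_eq_zero hn hj (f - g).2 fun r hr => ?_
        simpa [hε, sub_eq_zero] using hfg ⟨r, hr⟩ }
  rw [aDim, Module.finrank_eq_card_basis hbasis.basis, Fintype.card_coe]

lemma add_inv_pow_eq_sum_words {K : Type*} [Field K] {x : K} (hx : x ≠ 0) (j : ℕ) :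
    (x + x⁻¹) ^ j = ∑ w ∈ words j, x ^ charge w := by
  have hletters : x + x⁻¹ = ∑ a, x ^ letterCharge a := by
    simp [Fin.sum_univ_two, letterCharge]
  rw [hletters, Fintype.sum_pow, words, sum_map]
  refine sum_congr rfl fun g _ => ?_
  rw [Function.Embedding.coeFn_mk, charge_wordOfFn, zpow_sum₀ hx]

lemma two_cos_eq_xi_pow_add_inv (n k : ℕ) :
    ((2 * Real.cos (2 * π * k / n) : ℝ) : ℂ) = xi n ^ k + (xi n ^ k)⁻¹ := by
  have harg : (k : ℂ) * (2 * π * Complex.I / n) = ((2 * π * k / n : ℝ) : ℂ) * Complex.I := by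
    push_cast; ring
  rw [xi, ← Complex.exp_nat_mul, ← Complex.exp_neg, harg, ← neg_mul, ← Complex.two_cos]
  push_cast
  rfl

lemma sum_two_cos_pow_eq_mul_card_rhoFixedWords {n : ℕ} (hn : n ≠ 0) (j : ℕ) :
    ∑ k ∈ range n, (2 * Real.cos (2 * π * k / n)) ^ j = n * #(rhoFixedWords n j) := by
  have hxi : IsPrimitiveRoot (xi n) n := Complex.isPrimitiveRoot_exp n hn
  apply Complex.ofReal_injective
  simp_rw [Complex.ofReal_sum, Complex.ofReal_pow, two_cos_eq_xi_pow_add_inv,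
    add_inv_pow_eq_sum_words (pow_ne_zero _ (xi_ne_zero n)), hxi.sum_range_sum_pow_zpow]
  push_cast
  rfl

end DihedralInvariants

open DihedralInvariants

/-- Dimension of the degree-`j` component of the dihedral invariants, as a trace average
(noncommutative Molien formula for the dihedral group, coefficientwise). -/
theorem dihedral_invariants_dim_eq_cos_sum (n : ℕ) (hn : 1 ≤ n) (j : ℕ) (hj : 1 ≤ j) :
    (aDim n j : ℝ) =
      (1 / (2 * n)) * ∑ k ∈ Finset.range n, (2 * Real.cos (2 * π * k / n)) ^ j := by
  have hn0 : n ≠ 0 := by omega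
  rw [sum_two_cos_pow_eq_mul_card_rhoFixedWords hn0, card_rhoFixedWords_eq_two_mul hj,
    aDim_eq_card_orbitReps hn0 hj]
  field_simp
  push_cast
  ring

end
end

section
/- Let n = 4. Then a_0 = 1, a_1 = 0, a_2 = 1, a_3 = 0, and the dimensions satisfy the linear recurrence a_{m+2} = 4·a_m for every integer m ≥ 1. (Equivalently, the Hilbert series of ℂ⟨u,v⟩^{D_8} is (1−3t²)/(1−4t²).) -/
open scoped Real

noncomputable section

/-! The rotation `ρ` is diagonal on words: it multiplies a word `w` by `ξ ^ charge w`, where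
`charge w = #u - #v`, and `τ` exchanges the two letters. So the degree-`j` invariants are the
`τ`-symmetric combinations of words of length `j` with charge `≡ 0 (mod n)`. For `j ≥ 1`, `τ` maps
the words beginning with `u` bijectively onto those beginning with `v`, so such an invariant is
freely determined by its coefficients on the words `u w`; hence `a_{j+1} = N(j, -1)`, where
`N(j, r)` counts the words of length `j` with charge `≡ r`. Prepending a letter shifts the charge
by `±1`, so `N(j+2, -1) = N(j, 1) + 2 N(j, -1) + N(j, -3)`. For `n = 4`, `-3 ≡ 1` and `τ` gives
`N(j, 1) = N(j, -1)`, whence `N(j+2, -1) = 4 N(j, -1)`. -/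

open MonoidAlgebra

@[simp] lemma FreeMonoid.of_mul_eq_of_mul_iff {α : Type*} {a b : α} {x y : FreeMonoid α} :
    FreeMonoid.of a * x = FreeMonoid.of b * y ↔ a = b ∧ x = y := by
  rw [← FreeMonoid.toList.injective.eq_iff]
  simp

lemma FreeMonoid.disjoint_image_of_mul {α : Type*} {a b : α} (h : a ≠ b)
    (A B : Set (FreeMonoid α)) :
    Disjoint ((FreeMonoid.of a * ·) '' A) ((FreeMonoid.of b * ·) '' B) := by
  rw [Set.disjoint_left]
  rintro _ ⟨x, -, rfl⟩ ⟨y, -, hy⟩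
  exact h (FreeMonoid.of_mul_eq_of_mul_iff.1 hy).1.symm

namespace MonoidAlgebra

variable {k M : Type*}

def coeffInvariant [Semiring k] (σ : M → M) : Submodule k (MonoidAlgebra k M) where
  carrier := {x | ∀ m, x.coeff (σ m) = x.coeff m}
  add_mem' hx hy m := by simp [coeff_add, hx m, hy m]
  zero_mem' _ := rfl
  smul_mem' c x hx m := by simp [coeff_smul, hx m]

section

variable {σ : M → M} {T : Set M}

theorem eq_zero_of_mem_supported_inf_coeffInvariant [Semiring k] {x : MonoidAlgebra k M}
    (hx : x ∈ supported k k (T ∪ σ ⁻¹' T) ⊓ coeffInvariant σ) (hxT : ∀ m ∈ T, x.coeff m = 0) :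
    x = 0 := by
  obtain ⟨hsupp, hinv⟩ := Submodule.mem_inf.1 hx
  rw [← coeff_eq_zero]
  ext m
  by_cases hm : m ∈ T
  · exact hxT m hm
  by_cases hσm : σ m ∈ T
  · rw [← hinv m]
    exact hxT _ hσm
  · exact mem_supported'.1 hsupp m (by simp [hm, hσm])

theorem exists_mem_supported_inf_coeffInvariant [Semiring k] (hσ : σ.Involutive)
    (hdisj : Disjoint T (σ ⁻¹' T)) (g : T →₀ k) :
    ∃ x ∈ supported k k (T ∪ σ ⁻¹' T) ⊓ coeffInvariant σ, ∀ t : T, x.coeff t = g t := by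
  classical
  set y : M →₀ k := g.extendDomain
  have hy (m : M) (hm : m ∉ T) : y m = 0 := by simp [y, hm]
  let x : MonoidAlgebra k M := ofCoeff (y + y.comapDomain σ hσ.injective.injOn)
  have hx (m : M) : x.coeff m = y m + y (σ m) := rfl
  refine ⟨x, Submodule.mem_inf.2 ⟨mem_supported'.2 fun m hm => ?_, fun m => ?_⟩, fun t => ?_⟩
  · simp only [Set.mem_union, Set.mem_preimage, not_or] at hm
    rw [hx, hy _ hm.1, hy _ hm.2, add_zero]
  · rw [hx, hx, hσ m, add_comm]
  · rw [hx, hy _ (Set.disjoint_left.1 hdisj t.2), add_zero]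
    simp [y]

theorem finrank_supported_inf_coeffInvariant [Field k] (hσ : σ.Involutive) (hT : T.Finite)
    (hdisj : Disjoint T (σ ⁻¹' T)) :
    Module.finrank k ↥(supported k k (T ∪ σ ⁻¹' T) ⊓ coeffInvariant σ) = T.ncard := by
  set V := supported k k (T ∪ σ ⁻¹' T) ⊓ coeffInvariant σ
  let restrict : V →ₗ[k] T →₀ k :=
    Finsupp.lsubtypeDomain T ∘ₗ (coeffLinearEquiv k).toLinearMap ∘ₗ V.subtype
  have restrict_apply (x : V) (t : T) : restrict x t = (x : MonoidAlgebra k M).coeff t := rfl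
  have hinj : Function.Injective restrict := by
    rw [← LinearMap.ker_eq_bot, LinearMap.ker_eq_bot']
    intro x hx
    exact Subtype.ext <| eq_zero_of_mem_supported_inf_coeffInvariant x.2 fun m hm =>
      (restrict_apply x ⟨m, hm⟩).symm.trans (DFunLike.congr_fun hx ⟨m, hm⟩)
  have hsurj : Function.Surjective restrict := fun g => by
    obtain ⟨x, hxV, hxg⟩ := exists_mem_supported_inf_coeffInvariant hσ hdisj g
    exact ⟨⟨x, hxV⟩, Finsupp.ext hxg⟩
  have := hT.fintype
  rw [(LinearEquiv.ofBijective restrict ⟨hinj, hsurj⟩).finrank_eq, Module.finrank_finsupp_self,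
    ← Nat.card_eq_fintype_card, Nat.card_coe_set_eq]

end

end MonoidAlgebra

def letterCharge (i : Fin 2) : ℤ := if i = 0 then 1 else -1

def charge (w : FW) : ℤ := (w.toList.map letterCharge).sum

@[simp] lemma charge_one : charge 1 = 0 := rfl

@[simp] lemma charge_of_mul (i : Fin 2) (w : FW) :
    charge (FreeMonoid.of i * w) = letterCharge i + charge w := by
  simp [charge]

def swapLetters : FW →* FW := FreeMonoid.map Fin.rev

lemma swapLetters_involutive : Function.Involutive swapLetters := fun w => by
  rw [swapLetters, FreeMonoid.map_map, Fin.rev_involutive.comp_self, FreeMonoid.map_id]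
  rfl

@[simp] lemma length_swapLetters (w : FW) : (swapLetters w).length = w.length := by
  simp [swapLetters, FreeMonoid.length]

@[simp] lemma charge_swapLetters (w : FW) : charge (swapLetters w) = -charge w := by
  induction w using FreeMonoid.inductionOn' with
  | one => rfl
  | of_mul i w ih =>
    rw [map_mul, swapLetters, FreeMonoid.map_of, ← swapLetters, charge_of_mul, charge_of_mul, ih]
    fin_cases i <;> simp [letterCharge] <;> ring

lemma preimage_swapLetters_image_of_mul (i : Fin 2) (A : Set FW) :
    swapLetters ⁻¹' ((FreeMonoid.of i * ·) '' A) =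
      (FreeMonoid.of i.rev * ·) '' (swapLetters ⁻¹' A) := by
  simp only [← swapLetters_involutive.image_eq_preimage_symm, Set.image_image, map_mul]
  rfl

def wordsOfCharge (n j : ℕ) (r : ZMod n) : Set FW :=
  {w | w.length = j ∧ (charge w : ZMod n) = r}

lemma wordsOfCharge_finite (n j : ℕ) (r : ZMod n) : (wordsOfCharge n j r).Finite :=
  ((List.finite_length_eq (Fin 2) j).image FreeMonoid.ofList).subset fun w hw =>
    ⟨w.toList, hw.1, rfl⟩

lemma preimage_swapLetters_wordsOfCharge (n j : ℕ) (r : ZMod n) :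
    swapLetters ⁻¹' wordsOfCharge n j r = wordsOfCharge n j (-r) := by
  ext w
  simp [wordsOfCharge, neg_eq_iff_eq_neg]

lemma wordsOfCharge_succ (n j : ℕ) (r : ZMod n) :
    wordsOfCharge n (j + 1) r =
      (FreeMonoid.of 0 * ·) '' wordsOfCharge n j (r - 1) ∪
        (FreeMonoid.of 1 * ·) '' wordsOfCharge n j (r + 1) := by
  ext w
  cases w using FreeMonoid.casesOn with
  | one => simp [wordsOfCharge]
  | of_mul i w => fin_cases i <;> simp [wordsOfCharge, letterCharge] <;> grind

lemma ncard_wordsOfCharge_zero (n : ℕ) (r : ZMod n) :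
    (wordsOfCharge n 0 r).ncard = if r = 0 then 1 else 0 := by
  have : wordsOfCharge n 0 r = {w | w = 1 ∧ r = 0} := by
    ext w
    simp only [wordsOfCharge, FreeMonoid.length_eq_zero, Set.mem_ofPred_eq]
    constructor
    · rintro ⟨rfl, rfl⟩
      simp
    · rintro ⟨rfl, rfl⟩
      simp
  rw [this]
  split_ifs with hr <;> simp [hr]

lemma ncard_wordsOfCharge_succ (n j : ℕ) (r : ZMod n) :
    (wordsOfCharge n (j + 1) r).ncard =
      (wordsOfCharge n j (r - 1)).ncard + (wordsOfCharge n j (r + 1)).ncard := by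
  rw [wordsOfCharge_succ, Set.ncard_union_eq (FreeMonoid.disjoint_image_of_mul (by decide) _ _)
    ((wordsOfCharge_finite ..).image _) ((wordsOfCharge_finite ..).image _),
    Set.ncard_image_of_injective _ (mul_right_injective _),
    Set.ncard_image_of_injective _ (mul_right_injective _)]

lemma ncard_wordsOfCharge_neg (n j : ℕ) (r : ZMod n) :
    (wordsOfCharge n j (-r)).ncard = (wordsOfCharge n j r).ncard := by
  rw [← preimage_swapLetters_wordsOfCharge, Set.ncard_preimage_of_injective_subset_range
    swapLetters_involutive.injective (by simp [swapLetters_involutive.surjective.range_eq])]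

lemma ncard_wordsOfCharge_four_add_two (j : ℕ) :
    (wordsOfCharge 4 (j + 2) (-1)).ncard = 4 * (wordsOfCharge 4 j (-1)).ncard := by
  rw [ncard_wordsOfCharge_succ, ncard_wordsOfCharge_succ, ncard_wordsOfCharge_succ,
    show (-1 - 1 - 1 : ZMod 4) = -(-1) by decide, show (-1 - 1 + 1 : ZMod 4) = -1 by decide,
    show (-1 + 1 - 1 : ZMod 4) = -1 by decide, show (-1 + 1 + 1 : ZMod 4) = -(-1) by decide,
    ncard_wordsOfCharge_neg]
  ring

lemma dRho_single (n : ℕ) (w : FW) (c : ℂ) :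
    dRho n (single w c) = single w (Complex.exp (2 * π * Complex.I / n) ^ charge w * c) := by
  have hlift (w : FW) : FreeMonoid.lift (fun i : Fin 2 =>
      if i = 0 then Complex.exp (2 * π * Complex.I / n) • gu
      else (Complex.exp (2 * π * Complex.I / n))⁻¹ • gv) w =
      single w (Complex.exp (2 * π * Complex.I / n) ^ charge w) := by
    induction w using FreeMonoid.inductionOn' with
    | one => rfl
    | of_mul i w ih =>
      rw [map_mul, FreeMonoid.lift_eval_of, ih, charge_of_mul, zpow_add₀ (Complex.exp_ne_zero _)]
      fin_cases i <;> simp [letterCharge, gu, gv, single_mul_single]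
  rw [dRho, lift_single, hlift, smul_single', mul_comm]

lemma coeff_dRho (n : ℕ) (f : FA) (w : FW) :
    (dRho n f).coeff w = Complex.exp (2 * π * Complex.I / n) ^ charge w * f.coeff w := by
  induction f using MonoidAlgebra.induction_linear with
  | zero => simp
  | add f g hf hg => simp [coeff_add, hf, hg, mul_add]
  | single w' c =>
    rw [dRho_single, coeff_single, coeff_single]
    by_cases h : w' = w
    · subst h
      simp
    · simp [h]

lemma dRho_eq_self_iff {n : ℕ} (hn : n ≠ 0) (f : FA) :
    dRho n f = f ↔ f ∈ supported ℂ ℂ {w : FW | (charge w : ZMod n) = 0} := by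
  rw [mem_supported', ← coeff_inj, Finsupp.ext_iff]
  refine forall_congr' fun w => ?_
  rw [coeff_dRho, Set.mem_ofPred_eq, ZMod.intCast_zmod_eq_zero_iff_dvd,
    ← (Complex.isPrimitiveRoot_exp n hn).zpow_eq_one_iff_dvd, mul_left_eq_self₀,
    or_iff_not_imp_left]

lemma dTau_single (w : FW) (c : ℂ) : dTau (single w c) = single (swapLetters w) c := by
  have hlift : FreeMonoid.lift (fun i : Fin 2 => if i = 0 then gv else gu) =
      (MonoidAlgebra.of ℂ FW).comp swapLetters :=
    FreeMonoid.hom_eq fun i => by fin_cases i <;> rfl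
  rw [dTau, lift_single, hlift]
  simp

lemma coeff_dTau (f : FA) (w : FW) : (dTau f).coeff w = f.coeff (swapLetters w) := by
  induction f using MonoidAlgebra.induction_linear with
  | zero => simp
  | add f g hf hg => simp [coeff_add, hf, hg]
  | single w' c =>
    classical
    simp only [dTau_single, coeff_single, Finsupp.single_apply, swapLetters_involutive.eq_iff]

lemma dTau_eq_self_iff (f : FA) : dTau f = f ↔ f ∈ coeffInvariant swapLetters := by
  rw [← coeff_inj, Finsupp.ext_iff]
  exact forall_congr' fun w => by rw [coeff_dTau]

lemma invAlg_inf_degComp {n : ℕ} (hn : n ≠ 0) (j : ℕ) :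
    (invAlg n).toSubmodule ⊓ degComp j =
      supported ℂ ℂ (wordsOfCharge n j 0) ⊓ coeffInvariant swapLetters := by
  ext f
  simp only [invAlg, degComp, wordsOfCharge, Submodule.mem_inf, Subalgebra.mem_toSubmodule,
    Algebra.mem_inf, AlgHom.mem_equalizer, AlgHom.id_apply, dRho_eq_self_iff hn,
    dTau_eq_self_iff, mem_supported, Set.ofPred_and, Set.subset_inter_iff]
  tauto

lemma aDim_zero (n : ℕ) : aDim n 0 = 1 := by
  have hone : {w : FW | w.length = 0} = {1} := by
    ext w
    simp
  have hle : degComp 0 ≤ (invAlg n).toSubmodule := fun f hf => by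
    rw [degComp, hone, mem_supported, ← Finset.coe_singleton, Finset.coe_subset] at hf
    rw [show f = algebraMap ℂ FA (f.coeff 1) from
      coeff_injective (Finsupp.support_subset_singleton.1 hf)]
    exact Subalgebra.algebraMap_mem _ _
  rw [aDim, inf_eq_right.2 hle, degComp, hone, (supportedEquivFinsupp _).finrank_eq,
    Module.finrank_finsupp_self, Fintype.card_unique]

lemma aDim_succ {n : ℕ} (hn : n ≠ 0) (j : ℕ) :
    aDim n (j + 1) = (wordsOfCharge n j (-1)).ncard := by
  set T := (FreeMonoid.of 0 * ·) '' wordsOfCharge n j (-1)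
  have hswapT : swapLetters ⁻¹' T = (FreeMonoid.of 1 * ·) '' wordsOfCharge n j 1 := by
    rw [preimage_swapLetters_image_of_mul, preimage_swapLetters_wordsOfCharge, neg_neg]
    rfl
  have hunion : wordsOfCharge n (j + 1) 0 = T ∪ swapLetters ⁻¹' T := by
    rw [hswapT, wordsOfCharge_succ, zero_sub, zero_add]
  have hdisj : Disjoint T (swapLetters ⁻¹' T) :=
    hswapT ▸ FreeMonoid.disjoint_image_of_mul (by decide) _ _
  rw [aDim, invAlg_inf_degComp hn, hunion, finrank_supported_inf_coeffInvariant
    swapLetters_involutive ((wordsOfCharge_finite ..).image _) hdisj,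
    Set.ncard_image_of_injective _ (mul_right_injective _)]

/-- For `n = 4`: initial values and linear recurrence for the dimensions of the homogeneous
components of `ℂ⟨u,v⟩^{D₈}`. -/
theorem dihedral_invariants_recurrence_n4 :
    aDim 4 0 = 1 ∧ aDim 4 1 = 0 ∧ aDim 4 2 = 1 ∧ aDim 4 3 = 0 ∧
      ∀ m : ℕ, 1 ≤ m → aDim 4 (m + 2) = 4 * aDim 4 m := by
  have h4 : (4 : ℕ) ≠ 0 := by norm_num
  refine ⟨aDim_zero 4, ?_, ?_, ?_, fun m hm => ?_⟩
  · rw [aDim_succ h4, ncard_wordsOfCharge_zero, if_neg (by decide)]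
  · rw [aDim_succ h4, ncard_wordsOfCharge_succ, ncard_wordsOfCharge_zero,
      ncard_wordsOfCharge_zero, if_neg (by decide), if_pos (by decide)]
  · rw [aDim_succ h4, ncard_wordsOfCharge_four_add_two, ncard_wordsOfCharge_zero,
      if_neg (by decide)]
  · obtain ⟨k, rfl⟩ := Nat.exists_eq_add_of_le' hm
    rw [aDim_succ h4, ncard_wordsOfCharge_four_add_two, aDim_succ h4]

end
end
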